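/- Let B be a unital C*-algebra, let a, g ∈ B satisfy 0 ≤ a ≤ 1 and 0 ≤ g ≤ 1, and let ε₁, ε₂ > 0. Then, in the C*-algebra M₂(B) of 2×2 matrices over B, the diagonal matrix diag((a − (ε₁ + ε₂))₊, 0) is Cuntz subequivalent to the diagonal matrix diag((gag − ε₁)₊, (1 − g² − ε₂)₊). -/

import Mathlib

open scoped ComplexOrder
open Matrix

noncomputable section

/-- `(b - ε)₊`, the positive part of `b - ε`, via the continuous functional calculus. -/
def posCut {A : Type*} [CStarAlgebra A] (ε : ℝ) (b : A) : A :=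
  cfc (fun t : ℝ => max 0 (t - ε)) b

/-- The positive square root `b^{1/2}` via the continuous functional calculus. -/
def cfcSqrt {A : Type*} [CStarAlgebra A] (b : A) : A :=
  cfc (fun t : ℝ => Real.sqrt t) b

/-- Cuntz subequivalence relative to a subset `B ⊆ A` (the witnesses are taken in `B`):
`a ≼_B b`. -/
def CuntzSubIn {A : Type*} [CStarAlgebra A] (B : Set A) (a b : A) : Prop :=
  ∃ r : ℕ → A, (∀ n, r n ∈ B) ∧
    Filter.Tendsto (fun n => ‖star (r n) * b * r n - a‖) Filter.atTop (nhds 0)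

/-- Cuntz subequivalence `a ≼_A b` in `A`. -/
def CuntzSub {A : Type*} [CStarAlgebra A] (a b : A) : Prop :=
  CuntzSubIn Set.univ a b

/-- Positivity of a square matrix over a ⋆-ring: `M = Nᴴ * N` for some `N`. -/
def MatPos {A : Type*} [Ring A] [StarRing A] {n : ℕ} (M : Matrix (Fin n) (Fin n) A) : Prop :=
  ∃ N : Matrix (Fin n) (Fin n) A, M = Nᴴ * N

/-- A linear map is completely positive and contractive: every matrix amplification
preserves positivity, and the map is norm-contractive. -/
def IsCPC {A B : Type*} [NormedRing A] [StarRing A] [Module ℂ A]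
    [NormedRing B] [StarRing B] [Module ℂ B] (φ : A →ₗ[ℂ] B) : Prop :=
  (∀ (n : ℕ) (M : Matrix (Fin n) (Fin n) A), MatPos M → MatPos (M.map φ)) ∧
    ∀ a : A, ‖φ a‖ ≤ ‖a‖

/-- The fixed point set `A^α` of an action. -/
def fixedPts {G A : Type*} [Monoid G] [CStarAlgebra A] (α : G →* (A ≃ₐ[ℂ] A)) : Set A :=
  {a : A | ∀ g : G, α g a = a}

/-- `closure (d A d)`, the hereditary subalgebra generated by `d`. -/
def herCl {A : Type*} [CStarAlgebra A] (d : A) : Set A :=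
  closure (Set.range fun a : A => d * a * d)

/-- `closure (d B d)` for a subset `B ⊆ A`. -/
def herClIn {A : Type*} [CStarAlgebra A] (d : A) (B : Set A) : Set A :=
  closure {x : A | ∃ a ∈ B, x = d * a * d}

/-- Left translation on `C(G, ℂ)`: `(Lt g f) h = f (g⁻¹ * h)`. -/
def Lt {G : Type*} [Group G] [TopologicalSpace G] [IsTopologicalGroup G] (g : G)
    (f : C(G, ℂ)) : C(G, ℂ) :=
  f.comp (Homeomorph.mulLeft g⁻¹)

/-- The weak tracial Rokhlin property with comparison for an action of a compact group `G`
on a unital C⋆-algebra `A`. -/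
def WTRokhlinComp (G : Type*) {A : Type*} [Group G] [TopologicalSpace G] [IsTopologicalGroup G]
    [CompactSpace G] [CStarAlgebra A] [PartialOrder A] [StarOrderedRing A]
    (α : G →* (A ≃ₐ[ℂ] A)) : Prop :=
  ∀ ε > (0 : ℝ), ∀ F : Finset A, ∀ S : Finset C(G, ℂ), ∀ x : A, 0 ≤ x → ‖x‖ = 1 →
    ∀ y ∈ fixedPts α, 0 ≤ y → y ≠ 0 →
      ∃ d ∈ fixedPts α, 0 ≤ d ∧ ‖d‖ ≤ 1 ∧
        ∃ ψ : C(G, ℂ) →ₗ[ℂ] A, IsCPC ψ ∧ (∀ f : C(G, ℂ), ψ f ∈ herCl d) ∧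
          (∀ f₁ ∈ S, ∀ f₂ ∈ S, ‖ψ 1 * ψ (f₁ * f₂) - ψ f₁ * ψ f₂‖ < ε) ∧
          (∀ f ∈ S, ∀ a ∈ F, ‖ψ f * a - a * ψ f‖ < ε) ∧
          (∀ f ∈ S, (⨆ g : G, ‖ψ (Lt g f) - (α g) (ψ f)‖) < ε) ∧
          ψ 1 = d ∧
          CuntzSub (posCut ε (1 - d)) x ∧
          CuntzSubIn (fixedPts α) (posCut ε (1 - d)) y ∧
          CuntzSubIn (fixedPts α) (posCut ε (1 - d)) d ∧
          1 - ε < ‖d * x * d‖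

/-- Simplicity of a C⋆-algebra: the only closed two-sided ideals are `0` and everything. -/
def IsSimpleCStar (A : Type*) [CStarAlgebra A] : Prop :=
  ∀ I : TwoSidedIdeal A, IsClosed (I : Set A) → I = ⊥ ∨ I = ⊤


/-- Cuntz subequivalence for matrices over `A`, with witnesses whose entries lie in a
subset `B ⊆ A`.  Convergence is with respect to the (pi, equivalently norm) topology on
matrices. -/
def MatCuntzSubIn {A : Type*} [CStarAlgebra A] {n : ℕ} (B : Set A)
    (a b : Matrix (Fin n) (Fin n) A) : Prop :=
  ∃ r : ℕ → Matrix (Fin n) (Fin n) A, (∀ k i j, r k i j ∈ B) ∧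
    Filter.Tendsto (fun k => star (r k) * b * r k) Filter.atTop (nhds a)

/-! Write `a = x₁⋆x₁ + x₂⋆x₂` with `x₁ = g a^{1/2}` and `x₂ = (1 - g²)^{1/2} a^{1/2}`, so that
`x₁x₁⋆ = gag` and `x₂x₂⋆ ≤ 1 - g²`. If `xx⋆ - ε ≤ D` then `x⋆x - ε ≤ ε⁻¹ x⋆Dx`, because
`ε⁻¹ x⋆(xx⋆ - ε)x - (x⋆x - ε) = ε⁻¹ (x⋆x - ε)²`. Hence `a - (ε₁ + ε₂) ≤ r₁⋆d₁r₁ + r₂⋆d₂r₂` for the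
two cut-downs `dᵢ`, and the right-hand side is the corner of `R⋆ diag(d₁, d₂) R` for the column
`R = (r₁, r₂)`. It remains to see that `b - ε ≤ w` forces `(b - ε)₊ ≼ w`: for `e = (b - ε)₊` and
`q = e^{1/2}` one has `e² = q(b - ε)q ≤ qwq`, and `e² ≤ v` forces `e ≼ v` since `e ≤ v^{1/2}`.
-/

def CuntzBelow {A : Type*} [Mul A] [Star A] [TopologicalSpace A] (a b : A) : Prop :=
  a ∈ closure (Set.range fun r : A => star r * b * r)

namespace CuntzBelow

variable {A : Type*} [TopologicalSpace A]

theorem of_eq [Mul A] [Star A] {a b : A} (r : A) (h : star r * b * r = a) : CuntzBelow a b :=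
  subset_closure ⟨r, h⟩

theorem zero_left [MulZeroClass A] [Star A] (b : A) : CuntzBelow 0 b :=
  of_eq 0 (mul_zero _)

theorem trans [Monoid A] [StarMul A] [ContinuousMul A] {a b c : A}
    (hab : CuntzBelow a b) (hbc : CuntzBelow b c) : CuntzBelow a c := by
  refine closure_minimal ?_ isClosed_closure hab
  rintro _ ⟨r, rfl⟩
  have hconj : Continuous fun x : A => star r * x * r := by fun_prop
  refine closure_mono ?_ (image_closure_subset_closure_image hconj ⟨b, hbc, rfl⟩)
  rintro _ ⟨_, ⟨s, rfl⟩, rfl⟩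
  exact ⟨s * r, by simp only [star_mul, mul_assoc]⟩

theorem diagonal [Semiring A] [StarRing A] {n : Type*} [Fintype n] [DecidableEq n]
    {e d : n → A} (h : ∀ i, CuntzBelow (e i) (d i)) :
    CuntzBelow (Matrix.diagonal e) (Matrix.diagonal d) := by
  have he : e ∈ closure (Set.univ.pi fun i => Set.range fun r : A => star r * d i * r) := by
    rw [closure_pi_set]
    exact fun i _ => h i
  refine closure_mono ?_
    (image_closure_subset_closure_image continuous_id.matrix_diagonal ⟨e, he, rfl⟩)
  rintro _ ⟨f, hf, rfl⟩
  choose r hr using fun i => hf i (Set.mem_univ i)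
  refine ⟨Matrix.diagonal r, ?_⟩
  simp [Matrix.star_eq_conjTranspose, Matrix.diagonal_conjTranspose, hr]

end CuntzBelow

theorem CuntzBelow.matCuntzSubIn {A : Type*} [CStarAlgebra A] {n : ℕ}
    {a b : Matrix (Fin n) (Fin n) A} (h : CuntzBelow a b) : MatCuntzSubIn Set.univ a b := by
  have : FrechetUrysohnSpace (Matrix (Fin n) (Fin n) A) :=
    inferInstanceAs (FrechetUrysohnSpace (Fin n → Fin n → A))
  obtain ⟨x, hx, hlim⟩ := mem_closure_iff_seq_limit.1 h
  choose r hr using hx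
  exact ⟨r, fun _ _ _ => trivial, by simpa only [hr] using hlim⟩

theorem Matrix.diagonal_conj_add_zero {A : Type*} [Semiring A] [StarRing A] (p q d₁ d₂ : A) :
    Matrix.diagonal ![star p * d₁ * p + star q * d₂ * q, 0]
      = star (Matrix.of ![![p, 0], ![q, 0]]) * Matrix.diagonal ![d₁, d₂]
        * Matrix.of ![![p, 0], ![q, 0]] := by
  ext i j
  fin_cases i <;> fin_cases j <;>
    simp [Matrix.mul_apply, Matrix.star_apply, Fin.sum_univ_two]

theorem abs_sq_mul_div_sq_add_sq_le {δ : ℝ} (hδ : 0 < δ) (t : ℝ) :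
    |δ ^ 2 * t / (t ^ 2 + δ ^ 2)| ≤ δ / 2 := by
  have hpos : 0 < t ^ 2 + δ ^ 2 := by positivity
  rw [abs_div, abs_of_pos hpos, div_le_iff₀ hpos, abs_mul, abs_of_pos (by positivity)]
  nlinarith [sq_nonneg (|t| - δ), sq_abs t]

theorem cfc_mul_mul_self_mul_cfc_add_smul_eq_one {B : Type*} [CStarAlgebra B] {s : B}
    (hs : IsSelfAdjoint s) {h : ℝ → ℝ} (hh : Continuous h) {δ : ℝ} (hδ : δ ≠ 0)
    (hh_sq : ∀ t, h t * h t = (t ^ 2 + δ ^ 2)⁻¹) :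
    cfc h s * (s * s) * cfc h s + (δ * δ) • (cfc h s * cfc h s) = 1 := by
  have hpt : cfc (fun t => h t * (t * t) * h t + δ * δ * (h t * h t)) s = 1 := by
    rw [← cfc_const_one ℝ s]
    refine cfc_congr fun t _ => ?_
    calc h t * (t * t) * h t + δ * δ * (h t * h t) = (h t * h t) * (t ^ 2 + δ ^ 2) := by ring
      _ = 1 := by rw [hh_sq, inv_mul_cancel₀ (by positivity)]
  rwa [cfc_add s (fun t => h t * (t * t) * h t) (fun t => δ * δ * (h t * h t)),
    cfc_mul (fun t => h t * (t * t)) h, cfc_mul h (fun t => t * t),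
    cfc_mul (fun t => t) (fun t => t), cfc_id' ℝ s, cfc_const_mul (δ * δ) (fun t => h t * h t),
    cfc_mul h h] at hpt

section CStarAlgebra

variable {B : Type*} [CStarAlgebra B] [PartialOrder B] [StarOrderedRing B]

open CFC

theorem norm_sqrt_mul_star_mul_self_mul_sqrt_le {u v : B} (hu : 0 ≤ u) (huv : u ≤ v) (y : B) :
    ‖sqrt u * (star y * y) * sqrt u‖ ≤ ‖y * v * star y‖ := by
  have hsa : star (sqrt u) = sqrt u := (sqrt_nonneg u).isSelfAdjoint.star_eq
  calc ‖sqrt u * (star y * y) * sqrt u‖ = ‖star (y * sqrt u) * (y * sqrt u)‖ := by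
        rw [star_mul, hsa]; simp only [mul_assoc]
    _ = ‖y * sqrt u * star (y * sqrt u)‖ := by
        rw [CStarRing.norm_star_mul_self, CStarRing.norm_self_mul_star]
    _ = ‖y * u * star y‖ := by
        conv_rhs => rw [← sqrt_mul_sqrt_self u hu]
        rw [star_mul, hsa]; simp only [mul_assoc]
    _ ≤ ‖y * v * star y‖ := CStarAlgebra.norm_le_norm_of_nonneg_of_le
        (star_right_conjugate_nonneg hu y) (star_right_conjugate_le_conjugate huv y)

theorem cuntzBelow_of_mul_self_le {u v : B} (hu : 0 ≤ u) (huv : u * u ≤ v) :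
    CuntzBelow u v := by
  have hv : 0 ≤ v := by
    refine le_trans ?_ huv
    simpa only [hu.isSelfAdjoint.star_eq] using star_mul_self_nonneg u
  set s := sqrt v
  have hus : u ≤ s := by simpa only [sqrt_mul_self u hu] using sqrt_le_sqrt _ _ huv
  have hs : IsSelfAdjoint s := (sqrt_nonneg v).isSelfAdjoint
  refine Metric.mem_closure_iff.2 fun δ hδ => ?_
  obtain ⟨h, hh, hh_sq⟩ : ∃ h : ℝ → ℝ, Continuous h ∧ ∀ t, h t * h t = (t ^ 2 + δ ^ 2)⁻¹ :=
    ⟨fun t => (√(t ^ 2 + δ ^ 2))⁻¹, by fun_prop (disch := intro t; positivity),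
      fun t => by rw [← mul_inv, Real.mul_self_sqrt (by positivity)]⟩
  set H := cfc h s
  have hH : star H = H := (cfc_predicate h s).star_eq
  set Y := δ • H
  have hY : star Y = Y := by rw [star_smul, hH, star_trivial]
  have hunit : H * v * H + star Y * Y = 1 := by
    rw [hY, smul_mul_smul, ← sqrt_mul_sqrt_self v hv]
    exact cfc_mul_mul_self_mul_cfc_add_smul_eq_one hs hh hδ.ne' hh_sq
  refine ⟨_, ⟨H * sqrt u, rfl⟩, ?_⟩
  have hdiff : u - star (H * sqrt u) * v * (H * sqrt u) = sqrt u * (star Y * Y) * sqrt u := by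
    rw [eq_sub_of_add_eq' hunit, star_mul, hH, (sqrt_nonneg u).isSelfAdjoint.star_eq]
    nth_rw 1 [← sqrt_mul_sqrt_self u hu]
    noncomm_ring
  rw [dist_eq_norm, hdiff]
  calc _ ≤ ‖Y * s * star Y‖ := norm_sqrt_mul_star_mul_self_mul_sqrt_le hu hus _
    _ = ‖cfc (fun t => δ * δ * (h t * t * h t)) s‖ := by
        rw [cfc_const_mul (δ * δ) (fun t => h t * t * h t), cfc_mul (fun t => h t * t) h,
          cfc_mul h (fun t => t), cfc_id' ℝ s, hY, smul_mul_assoc, smul_mul_smul]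
    _ ≤ δ / 2 := by
        refine norm_cfc_le (by positivity) fun t _ => ?_
        have hval : δ * δ * (h t * t * h t) = δ ^ 2 * t / (t ^ 2 + δ ^ 2) := by
          rw [div_eq_mul_inv, ← hh_sq]; ring
        rw [hval, Real.norm_eq_abs]
        exact abs_sq_mul_div_sq_add_sq_le hδ t
    _ < δ := by linarith

theorem posCut_nonneg (ε : ℝ) (b : B) : 0 ≤ posCut ε b :=
  cfc_nonneg fun _ _ => le_max_left _ _

theorem sub_algebraMap_le_posCut {b : B} (hb : IsSelfAdjoint b) (ε : ℝ) :
    b - algebraMap ℝ B ε ≤ posCut ε b := by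
  rw [← cfc_id' ℝ b, ← cfc_const ε b, ← cfc_sub (fun t => t) (fun _ => ε), posCut, cfc_id' ℝ b]
  exact cfc_mono fun t _ => le_max_right 0 (t - ε)

theorem posCut_cuntzBelow_of_sub_le {b w : B} {ε : ℝ} (hb : IsSelfAdjoint b)
    (h : b - algebraMap ℝ B ε ≤ w) : CuntzBelow (posCut ε b) w := by
  set q := cfc (fun t => √(max 0 (t - ε))) b
  have hq : IsSelfAdjoint q := cfc_predicate _ b
  have hsq : posCut ε b * posCut ε b = q * (b - algebraMap ℝ B ε) * q := by
    rw [← cfc_id' ℝ b, ← cfc_const ε b, ← cfc_sub (fun t => t) (fun _ => ε), posCut, cfc_id' ℝ b,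
      ← cfc_mul (fun t => max 0 (t - ε)) (fun t => max 0 (t - ε)),
      ← cfc_mul (fun t => √(max 0 (t - ε))) (fun t => t - ε),
      ← cfc_mul (fun t => √(max 0 (t - ε)) * (t - ε)) (fun t => √(max 0 (t - ε)))]
    refine cfc_congr fun t _ => ?_
    have hm := Real.mul_self_sqrt (le_max_left 0 (t - ε))
    rcases le_total (t - ε) 0 with ht | ht
    · simp [max_eq_left ht]
    · simp only [max_eq_right ht] at hm ⊢
      linear_combination (t - ε) * hm.symm
  refine (cuntzBelow_of_mul_self_le (v := q * w * q) (posCut_nonneg ε b) ?_).trans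
    (CuntzBelow.of_eq q ?_)
  · rw [hsq]
    exact hq.conjugate_le_conjugate h
  · rw [hq.star_eq]

theorem star_mul_self_sub_le_of_mul_star_self_sub_le {x D : B} {ε : ℝ} (hε : 0 < ε)
    (h : x * star x - algebraMap ℝ B ε ≤ D) :
    star x * x - algebraMap ℝ B ε ≤ star ((√ε)⁻¹ • x) * D * ((√ε)⁻¹ • x) := by
  refine le_trans ?_ (star_left_conjugate_le_conjugate h _)
  set t := (√ε)⁻¹
  have ht : t * t * ε = 1 := by
    rw [← mul_inv, Real.mul_self_sqrt hε.le, inv_mul_cancel₀ hε.ne']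
  have hsq : star (t • x) * (x * star x - algebraMap ℝ B ε) * (t • x)
        - (star x * x - algebraMap ℝ B ε)
      = star (t • (star x * x - algebraMap ℝ B ε)) * (t • (star x * x - algebraMap ℝ B ε)) := by
    simp only [Algebra.algebraMap_eq_smul_one, star_smul, star_sub, star_mul, star_star, star_one,
      star_trivial, smul_mul_assoc, mul_smul_comm, mul_sub, sub_mul, mul_one, one_mul, smul_sub,
      smul_smul, mul_assoc]
    linear_combination (norm := module) ht • (star x * x - ε • 1)
  rw [← sub_nonneg, hsq]
  exact star_mul_self_nonneg _

theorem exists_star_mul_self_add_eq {a g : B} (ha₀ : 0 ≤ a) (ha₁ : a ≤ 1) (hg₀ : 0 ≤ g)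
    (hg₁ : g ≤ 1) :
    ∃ x₁ x₂ : B, star x₁ * x₁ + star x₂ * x₂ = a ∧ x₁ * star x₁ = g * a * g ∧
      x₂ * star x₂ ≤ 1 - g ^ 2 := by
  have hg2 : g ^ 2 ≤ 1 := by
    have hg : ‖g‖ ≤ 1 := (CStarAlgebra.norm_le_one_iff_of_nonneg g hg₀).2 hg₁
    refine (CStarAlgebra.norm_le_one_iff_of_nonneg _ hg₀.isSelfAdjoint.sq_nonneg).1 ?_
    calc ‖g ^ 2‖ ≤ ‖g‖ ^ 2 := norm_pow_le' g two_pos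
      _ ≤ 1 := pow_le_one₀ (norm_nonneg g) hg
  set s := sqrt a
  set w := sqrt (1 - g ^ 2)
  have hs : star s = s := (sqrt_nonneg a).isSelfAdjoint.star_eq
  have hw : star w = w := (sqrt_nonneg _).isSelfAdjoint.star_eq
  have hg : star g = g := hg₀.isSelfAdjoint.star_eq
  have hss : s * s = a := sqrt_mul_sqrt_self a ha₀
  have hww : w * w = 1 - g ^ 2 := sqrt_mul_sqrt_self _ (sub_nonneg.2 hg2)
  refine ⟨g * s, w * s, ?_, ?_, ?_⟩
  · calc star (g * s) * (g * s) + star (w * s) * (w * s) = s * (g ^ 2 + w * w) * s := by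
          simp only [star_mul, hs, hg, hw]; noncomm_ring
      _ = a := by rw [hww, add_sub_cancel, mul_one, hss]
  · calc (g * s) * star (g * s) = g * (s * s) * g := by simp only [star_mul, hs, hg, mul_assoc]
      _ = g * a * g := by rw [hss]
  · calc (w * s) * star (w * s) = w * a * w := by simp only [star_mul, hs, hw, ← hss, mul_assoc]
      _ ≤ w * 1 * w := IsSelfAdjoint.conjugate_le_conjugate ha₁ hw
      _ = 1 - g ^ 2 := by rw [mul_one, hww]

end CStarAlgebra

/-- the cut-down comparison lemma
`(a - (ε₁ + ε₂))₊ ⊕ 0 ≼ (gag - ε₁)₊ ⊕ (1 - g² - ε₂)₊` in `M₂(B)`. -/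
theorem cutdown_comparison
    {B : Type*} [CStarAlgebra B] [PartialOrder B] [StarOrderedRing B]
    (a g : B) (ha₀ : 0 ≤ a) (ha₁ : a ≤ 1) (hg₀ : 0 ≤ g) (hg₁ : g ≤ 1)
    (ε₁ ε₂ : ℝ) (hε₁ : 0 < ε₁) (hε₂ : 0 < ε₂) :
    MatCuntzSubIn (Set.univ : Set B)
      (Matrix.diagonal ![posCut (ε₁ + ε₂) a, 0])
      (Matrix.diagonal ![posCut ε₁ (g * a * g), posCut ε₂ (1 - g ^ 2)]) := by
  obtain ⟨x₁, x₂, hsum, hx₁, hx₂⟩ := exists_star_mul_self_add_eq ha₀ ha₁ hg₀ hg₁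
  set d₁ := posCut ε₁ (g * a * g)
  set d₂ := posCut ε₂ (1 - g ^ 2)
  set r₁ := (√ε₁)⁻¹ • x₁
  set r₂ := (√ε₂)⁻¹ • x₂
  have h₁ : x₁ * star x₁ - algebraMap ℝ B ε₁ ≤ d₁ :=
    hx₁ ▸ sub_algebraMap_le_posCut
      (IsSelfAdjoint.conjugate_nonneg ha₀ hg₀.isSelfAdjoint).isSelfAdjoint ε₁
  have h₂ : x₂ * star x₂ - algebraMap ℝ B ε₂ ≤ d₂ :=
    (sub_le_sub_right hx₂ _).trans
      (sub_algebraMap_le_posCut ((IsSelfAdjoint.one B).sub (hg₀.isSelfAdjoint.pow 2)) ε₂)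
  have hle : a - algebraMap ℝ B (ε₁ + ε₂) ≤ star r₁ * d₁ * r₁ + star r₂ * d₂ * r₂ := by
    rw [map_add, ← hsum, add_sub_add_comm]
    exact add_le_add (star_mul_self_sub_le_of_mul_star_self_sub_le hε₁ h₁)
      (star_mul_self_sub_le_of_mul_star_self_sub_le hε₂ h₂)
  have hcorner : CuntzBelow (Matrix.diagonal ![posCut (ε₁ + ε₂) a, 0])
      (Matrix.diagonal ![star r₁ * d₁ * r₁ + star r₂ * d₂ * r₂, 0]) := by
    refine CuntzBelow.diagonal (Fin.forall_fin_two.2 ⟨?_, CuntzBelow.zero_left 0⟩)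
    exact posCut_cuntzBelow_of_sub_le ha₀.isSelfAdjoint hle
  exact (hcorner.trans (.of_eq _ (Matrix.diagonal_conj_add_zero r₁ r₂ d₁ d₂).symm)).matCuntzSubIn
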